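/- The increment Δ(s) = (1/n²)·[(n-2s+2)(v_1 - v_{n+2-s}) - Σ_{i=n+3-s}^{n}(v_{n+2-s} - v_i)] is nonincreasing in s for s ∈ {2,…,n}, i.e. Δ(s+1) ≤ Δ(s) for 2 ≤ s ≤ n-1. -/

import Mathlib

open Finset

/-- The increment of maximal coalition gains, in its explicit form. -/
noncomputable def Delta (n : ℕ) (v : ℕ → ℝ) (s : ℕ) : ℝ :=
  1 / (n : ℝ) ^ 2 *
    (((n : ℝ) - 2 * s + 2) * (v 1 - v (n + 2 - s))
      - ∑ i ∈ Finset.Icc (n + 3 - s) n, (v (n + 2 - s) - v i))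

theorem sum_Icc_sub_eq_nsmul_add_sum_Icc_succ {M : Type*} [AddCommGroup M] (f : ℕ → M) (a : M)
    (p n : ℕ) :
    ∑ i ∈ Icc p n, (a - f i) = (n + 1 - p) • (a - f p) + ∑ i ∈ Icc (p + 1) n, (f p - f i) := by
  have hdrop : ∑ i ∈ Icc (p + 1) n, (f p - f i) = ∑ i ∈ Icc p n, (f p - f i) := by
    refine sum_subset (Icc_subset_Icc_left p.le_succ) fun i hi hi' => ?_
    have : i = p := by simp only [mem_Icc] at hi hi'; omega
    simp [this]
  rw [hdrop, ← Nat.card_Icc, ← sum_const, ← sum_add_distrib]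
  simp only [sub_add_sub_cancel]

theorem Delta_sub_Delta_succ (n : ℕ) (v : ℕ → ℝ) {s : ℕ} (hs : s ≤ n + 1) :
    Delta n v s - Delta n v (s + 1) =
      1 / (n : ℝ) ^ 2 * (2 * (v 1 - v (n + 2 - s))
        + ((n : ℝ) + (s - 1 : ℕ) - 2 * s) * (v (n + 1 - s) - v (n + 2 - s))) := by
  have hsplit := sum_Icc_sub_eq_nsmul_add_sum_Icc_succ v (v (n + 1 - s)) (n + 2 - s) n
  rw [show n + 1 - (n + 2 - s) = s - 1 by omega, show n + 2 - s + 1 = n + 3 - s by omega,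
    nsmul_eq_mul] at hsplit
  rw [Delta, Delta, show n + 2 - (s + 1) = n + 1 - s by omega,
    show n + 3 - (s + 1) = n + 2 - s by omega, hsplit]
  push_cast
  ring

theorem increment_nonincreasing_general (n : ℕ) (v : ℕ → ℝ)
    (hv : ∀ i j, i ≤ j → v j ≤ v i)
    (s : ℕ) (hsn : s ≤ n - 1) :
    Delta n v (s + 1) ≤ Delta n v s := by
  have hcoef : (0 : ℝ) ≤ (n : ℝ) + (s - 1 : ℕ) - 2 * s := by
    have : 2 * s ≤ n + (s - 1) := by omega
    rw [sub_nonneg]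
    exact_mod_cast this
  have hfirst := sub_nonneg.2 (hv 1 (n + 2 - s) (by omega))
  have hpivot := sub_nonneg.2 (hv (n + 1 - s) (n + 2 - s) (by omega))
  rw [← sub_nonneg, Delta_sub_Delta_succ n v (by omega)]
  exact mul_nonneg (by positivity) (by positivity)

theorem increment_nonincreasing (n : ℕ) (v : ℕ → ℝ)
    (hv : ∀ i j, i ≤ j → v j ≤ v i)
    (s : ℕ) (hs : 2 ≤ s) (hsn : s ≤ n - 1) :
    Delta n v (s + 1) ≤ Delta n v s :=
  increment_nonincreasing_general n v hv s hsn
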